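/- Let X₁, X₂, Y be finite sets with maps p : X₁ → Y and q : X₂ → Y. Then the canonical map χ : P(X₁ ×_Y X₂) → P(X₁) ×_{P(Y)} P(X₂) sending a distribution on the fiber product to its pair of marginals is an open surjective affine map between compact convex polytopes. -/
import Mathlib


/-- Pushforward of a distribution on a finite set along a map. -/
def pushforward {X Y : Type*} [Fintype X] [DecidableEq Y]
    (f : X → Y) (μ : X → ℝ) : Y → ℝ :=
  fun y => ∑ x, if f x = y then μ x else 0

lemma pushforward_mem_stdSimplex {X Y : Type*} [Fintype X] [Fintype Y] [DecidableEq Y]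
    (f : X → Y) {μ : X → ℝ} (hμ : μ ∈ stdSimplex ℝ X) :
    pushforward f μ ∈ stdSimplex ℝ Y := by
  constructor
  · intro y
    exact Finset.sum_nonneg fun x _ => by by_cases h : f x = y <;> simp [h, hμ.1 x]
  · calc ∑ y, pushforward f μ y = ∑ y, ∑ x, if f x = y then μ x else 0 := rfl
      _ = ∑ x, ∑ y, if f x = y then μ x else 0 := Finset.sum_comm
      _ = ∑ x, μ x := by simp
      _ = 1 := hμ.2

lemma pushforward_comp {X Y T : Type*} [Fintype X] [Fintype Y] [DecidableEq Y]
    [DecidableEq T] (f : X → Y) (p : Y → T) (μ : X → ℝ) :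
    pushforward p (pushforward f μ) = pushforward (p ∘ f) μ := by
  funext t
  unfold pushforward
  have h : ∀ y, (if p y = t then (∑ x, if f x = y then μ x else 0) else 0)
      = ∑ x, if p y = t then (if f x = y then μ x else 0) else 0 := fun y => by
    split <;> simp
  rw [Finset.sum_congr rfl (fun y _ => h y), Finset.sum_comm]
  refine Finset.sum_congr rfl fun x _ => ?_
  have h2 : ∀ y, (if p y = t then if f x = y then μ x else 0 else 0)
      = if f x = y then (if p (f x) = t then μ x else 0) else 0 := fun y => by
    by_cases hy : f x = y
    · subst hy; simp
    · simp [hy]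
  rw [Finset.sum_congr rfl (fun y _ => h2 y)]
  simp [Function.comp]


section Aux

/-! ### Generic pushforward lemmas -/

variable {X Y : Type*} [Fintype X] [Fintype Y] [DecidableEq Y]

lemma pushforward_nonneg (f : X → Y) {u : X → ℝ} (hu : ∀ x, 0 ≤ u x) (y : Y) :
    0 ≤ pushforward f u y :=
  Finset.sum_nonneg fun x _ => by by_cases h : f x = y <;> simp [h, hu x]

lemma single_le_pushforward (f : X → Y) {u : X → ℝ} (hu : ∀ x, 0 ≤ u x) (x : X) :
    u x ≤ pushforward f u (f x) := by
  have := Finset.single_le_sum (f := fun x' => if f x' = f x then u x' else 0)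
    (fun i _ => by by_cases h : f i = f x <;> simp [h, hu i]) (Finset.mem_univ x)
  simpa [pushforward] using this

lemma pushforward_sub_smul (f : X → Y) (u v : X → ℝ) (c : ℝ) :
    pushforward f (fun x => u x - c * v x)
      = fun y => pushforward f u y - c * pushforward f v y := by
  funext y
  simp only [pushforward, Finset.mul_sum, ← Finset.sum_sub_distrib]
  exact Finset.sum_congr rfl fun x _ => by split <;> simp

lemma pushforward_smul_add (f : X → Y) (u v : X → ℝ) (t s : ℝ) :
    pushforward f (t • u + s • v) = t • pushforward f u + s • pushforward f v := by
  funext y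
  simp only [pushforward, Pi.add_apply, Pi.smul_apply, smul_eq_mul, Finset.mul_sum,
    ← Finset.sum_add_distrib]
  exact Finset.sum_congr rfl fun x _ => by split <;> simp

lemma sum_pushforward (f : X → Y) (u : X → ℝ) :
    ∑ y, pushforward f u y = ∑ x, u x := by
  calc ∑ y, pushforward f u y = ∑ y, ∑ x, if f x = y then u x else 0 := rfl
    _ = ∑ x, ∑ y, if f x = y then u x else 0 := Finset.sum_comm
    _ = ∑ x, u x := by simp

end Aux

/-! ### The scaling factor -/

noncomputable def facR (u v : ℝ) : ℝ := if v = 0 then 1 else min 1 (u / v)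

lemma facR_nonneg {u v : ℝ} (hu : 0 ≤ u) (hv : 0 ≤ v) : 0 ≤ facR u v := by
  unfold facR; split
  · exact zero_le_one
  · exact le_min zero_le_one (div_nonneg hu hv)

lemma facR_le_one (u v : ℝ) : facR u v ≤ 1 := by
  unfold facR; split
  · exact le_refl _
  · exact min_le_left _ _

lemma facR_self (v : ℝ) : facR v v = 1 := by
  unfold facR; split
  · rfl
  · rename_i h; rw [div_self h]; simp

lemma continuous_facR_left (c : ℝ) : Continuous fun u : ℝ => facR u c := by
  unfold facR; split
  · exact continuous_const
  · exact continuous_const.min (continuous_id.div_const c)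

noncomputable def lamF {X₁ X₂ : Type*} [Fintype X₁] [Fintype X₂]
    (a a' : X₁ → ℝ) (b b' : X₂ → ℝ) : ℝ :=
  (∏ x, facR (a' x) (a x)) * (∏ x, facR (b' x) (b x))

section Lam

variable {X₁ X₂ : Type*} [Fintype X₁] [Fintype X₂]
  {a a' : X₁ → ℝ} {b b' : X₂ → ℝ}
  (ha : ∀ x, 0 ≤ a x) (ha' : ∀ x, 0 ≤ a' x) (hb : ∀ x, 0 ≤ b x) (hb' : ∀ x, 0 ≤ b' x)

include ha ha' hb hb' in
lemma lamF_nonneg : 0 ≤ lamF a a' b b' :=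
  mul_nonneg (Finset.prod_nonneg fun x _ => facR_nonneg (ha' x) (ha x))
    (Finset.prod_nonneg fun x _ => facR_nonneg (hb' x) (hb x))

include ha ha' hb hb' in
lemma lamF_le_one : lamF a a' b b' ≤ 1 := by
  have h1 : (∏ x, facR (a' x) (a x)) ≤ 1 :=
    Finset.prod_le_one (fun x _ => facR_nonneg (ha' x) (ha x)) (fun x _ => facR_le_one _ _)
  have h2 : (∏ x, facR (b' x) (b x)) ≤ 1 :=
    Finset.prod_le_one (fun x _ => facR_nonneg (hb' x) (hb x)) (fun x _ => facR_le_one _ _)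
  have h1' : (0:ℝ) ≤ ∏ x, facR (a' x) (a x) :=
    Finset.prod_nonneg fun x _ => facR_nonneg (ha' x) (ha x)
  calc lamF a a' b b' ≤ (∏ x, facR (a' x) (a x)) * 1 := by
        exact mul_le_mul_of_nonneg_left h2 h1'
    _ = ∏ x, facR (a' x) (a x) := mul_one _
    _ ≤ 1 := h1

include ha ha' hb hb' in
lemma lamF_le_facL (x : X₁) : lamF a a' b b' ≤ facR (a' x) (a x) := by
  classical
  have h2 : (∏ x, facR (b' x) (b x)) ≤ 1 :=
    Finset.prod_le_one (fun x _ => facR_nonneg (hb' x) (hb x)) (fun x _ => facR_le_one _ _)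
  have h1' : (0:ℝ) ≤ ∏ x, facR (a' x) (a x) :=
    Finset.prod_nonneg fun x _ => facR_nonneg (ha' x) (ha x)
  have key : (∏ x, facR (a' x) (a x)) ≤ facR (a' x) (a x) := by
    rw [← Finset.mul_prod_erase Finset.univ _ (Finset.mem_univ x)]
    calc facR (a' x) (a x) * ∏ y ∈ Finset.univ.erase x, facR (a' y) (a y)
        ≤ facR (a' x) (a x) * 1 := by
          exact mul_le_mul_of_nonneg_left
            (Finset.prod_le_one (fun y _ => facR_nonneg (ha' y) (ha y))
              (fun y _ => facR_le_one _ _)) (facR_nonneg (ha' x) (ha x))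
      _ = facR (a' x) (a x) := mul_one _
  calc lamF a a' b b' ≤ (∏ x, facR (a' x) (a x)) * 1 := mul_le_mul_of_nonneg_left h2 h1'
    _ = ∏ x, facR (a' x) (a x) := mul_one _
    _ ≤ facR (a' x) (a x) := key

include ha ha' hb hb' in
lemma lamF_le_facRt (x : X₂) : lamF a a' b b' ≤ facR (b' x) (b x) := by
  classical
  have h1 : (∏ x, facR (a' x) (a x)) ≤ 1 :=
    Finset.prod_le_one (fun x _ => facR_nonneg (ha' x) (ha x)) (fun x _ => facR_le_one _ _)
  have h2' : (0:ℝ) ≤ ∏ x, facR (b' x) (b x) :=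
    Finset.prod_nonneg fun x _ => facR_nonneg (hb' x) (hb x)
  have key : (∏ x, facR (b' x) (b x)) ≤ facR (b' x) (b x) := by
    rw [← Finset.mul_prod_erase Finset.univ _ (Finset.mem_univ x)]
    calc facR (b' x) (b x) * ∏ y ∈ Finset.univ.erase x, facR (b' y) (b y)
        ≤ facR (b' x) (b x) * 1 := by
          exact mul_le_mul_of_nonneg_left
            (Finset.prod_le_one (fun y _ => facR_nonneg (hb' y) (hb y))
              (fun y _ => facR_le_one _ _)) (facR_nonneg (hb' x) (hb x))
      _ = facR (b' x) (b x) := mul_one _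
  calc lamF a a' b b' ≤ 1 * (∏ x, facR (b' x) (b x)) := mul_le_mul_of_nonneg_right h1 h2'
    _ = ∏ x, facR (b' x) (b x) := one_mul _
    _ ≤ facR (b' x) (b x) := key

include ha ha' hb hb' in
lemma lamF_mul_le_left (x : X₁) : lamF a a' b b' * a x ≤ a' x := by
  by_cases h : a x = 0
  · rw [h, mul_zero]; exact ha' x
  · have hax : 0 < a x := lt_of_le_of_ne (ha x) (Ne.symm h)
    have h1 : lamF a a' b b' ≤ a' x / a x := by
      refine le_trans (lamF_le_facL ha ha' hb hb' x) ?_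
      unfold facR; rw [if_neg h]; exact min_le_right _ _
    calc lamF a a' b b' * a x ≤ (a' x / a x) * a x := mul_le_mul_of_nonneg_right h1 (ha x)
      _ = a' x := div_mul_cancel₀ _ h

include ha ha' hb hb' in
lemma lamF_mul_le_right (x : X₂) : lamF a a' b b' * b x ≤ b' x := by
  by_cases h : b x = 0
  · rw [h, mul_zero]; exact hb' x
  · have h1 : lamF a a' b b' ≤ b' x / b x := by
      refine le_trans (lamF_le_facRt ha ha' hb hb' x) ?_
      unfold facR; rw [if_neg h]; exact min_le_right _ _
    calc lamF a a' b b' * b x ≤ (b' x / b x) * b x := mul_le_mul_of_nonneg_right h1 (hb x)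
      _ = b' x := div_mul_cancel₀ _ h

end Lam

lemma lamF_self {X₁ X₂ : Type*} [Fintype X₁] [Fintype X₂] (a : X₁ → ℝ) (b : X₂ → ℝ) :
    lamF a a b b = 1 := by
  unfold lamF
  rw [Finset.prod_congr rfl (fun x _ => facR_self (a x)),
    Finset.prod_congr rfl (fun x _ => facR_self (b x))]
  simp

lemma continuous_lamF {X₁ X₂ : Type*} [Fintype X₁] [Fintype X₂] (a : X₁ → ℝ) (b : X₂ → ℝ) :
    Continuous (fun μ : (X₁ → ℝ) × (X₂ → ℝ) => lamF a μ.1 b μ.2) := by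
  apply Continuous.mul
  · apply continuous_finset_prod
    intro x _
    exact (continuous_facR_left (a x)).comp ((continuous_apply x).comp continuous_fst)
  · apply continuous_finset_prod
    intro x _
    exact (continuous_facR_left (b x)).comp ((continuous_apply x).comp continuous_snd)
section

variable {X₁ X₂ Y : Type*} [Fintype X₁] [Fintype X₂] [Fintype Y]
  [DecidableEq X₁] [DecidableEq X₂] [DecidableEq Y]
  (p : X₁ → Y) (q : X₂ → Y)

/-- The canonical map sending a distribution on the fiber product to its marginals. -/
noncomputable def chiMap :
    stdSimplex ℝ {xy : X₁ × X₂ // p xy.1 = q xy.2} →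
      {μ : (X₁ → ℝ) × (X₂ → ℝ) //
        (μ.1 ∈ stdSimplex ℝ X₁ ∧ μ.2 ∈ stdSimplex ℝ X₂) ∧
          pushforward p μ.1 = pushforward q μ.2} :=
  fun τ =>
    ⟨(pushforward (fun w : {xy : X₁ × X₂ // p xy.1 = q xy.2} => w.1.1) τ.1,
      pushforward (fun w : {xy : X₁ × X₂ // p xy.1 = q xy.2} => w.1.2) τ.1),
      ⟨⟨pushforward_mem_stdSimplex _ τ.2, pushforward_mem_stdSimplex _ τ.2⟩, by
        rw [pushforward_comp, pushforward_comp]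
        exact congrArg (fun f => pushforward f τ.1) (funext fun w => w.2)⟩⟩


lemma sum_fiberProd (F : X₁ × X₂ → ℝ) :
    ∑ w : {xy : X₁ × X₂ // p xy.1 = q xy.2}, F w.1
      = ∑ x₁, ∑ x₂, if p x₁ = q x₂ then F (x₁, x₂) else 0 := by
  rw [← Finset.sum_subtype (Finset.univ.filter fun xy : X₁ × X₂ => p xy.1 = q xy.2)
      (fun x => by simp) F, Finset.sum_filter, Fintype.sum_prod_type]

lemma pushforward_fst_eq (h : {xy : X₁ × X₂ // p xy.1 = q xy.2} → ℝ) (x₁ : X₁) :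
    pushforward (fun w : {xy : X₁ × X₂ // p xy.1 = q xy.2} => w.1.1) h x₁
      = ∑ x₂, if hc : p x₁ = q x₂ then h ⟨(x₁, x₂), hc⟩ else 0 := by
  have K := sum_fiberProd p q (fun xy => if hc : p xy.1 = q xy.2 then
      (if xy.1 = x₁ then h ⟨xy, hc⟩ else 0) else 0)
  calc pushforward (fun w : {xy : X₁ × X₂ // p xy.1 = q xy.2} => w.1.1) h x₁
      = ∑ w : {xy : X₁ × X₂ // p xy.1 = q xy.2},
          (if hc : p w.1.1 = q w.1.2 then (if w.1.1 = x₁ then h ⟨w.1, hc⟩ else 0) else 0) := by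
        refine Finset.sum_congr rfl fun w _ => ?_
        rw [dif_pos w.2]
    _ = ∑ x₁', ∑ x₂, if p x₁' = q x₂ then
          (if hc : p x₁' = q x₂ then (if x₁' = x₁ then h ⟨(x₁', x₂), hc⟩ else 0) else 0)
          else 0 := K
    _ = ∑ x₁', ∑ x₂, if x₁' = x₁ then
          (if hc : p x₁ = q x₂ then h ⟨(x₁, x₂), hc⟩ else 0) else 0 := by
        refine Finset.sum_congr rfl fun x₁' _ => Finset.sum_congr rfl fun x₂ _ => ?_
        by_cases hx : x₁' = x₁
        · subst hx
          by_cases hc : p x₁' = q x₂ <;> simp [hc]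
        · by_cases hc : p x₁' = q x₂ <;> simp [hc, hx]
    _ = ∑ x₂, if hc : p x₁ = q x₂ then h ⟨(x₁, x₂), hc⟩ else 0 := by
        rw [Finset.sum_comm]
        refine Finset.sum_congr rfl fun x₂ _ => ?_
        rw [Finset.sum_ite_eq' Finset.univ x₁
          (fun _ => if hc : p x₁ = q x₂ then h ⟨(x₁, x₂), hc⟩ else 0)]
        simp

lemma pushforward_snd_eq (h : {xy : X₁ × X₂ // p xy.1 = q xy.2} → ℝ) (x₂ : X₂) :
    pushforward (fun w : {xy : X₁ × X₂ // p xy.1 = q xy.2} => w.1.2) h x₂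
      = ∑ x₁, if hc : p x₁ = q x₂ then h ⟨(x₁, x₂), hc⟩ else 0 := by
  have K := sum_fiberProd p q (fun xy => if hc : p xy.1 = q xy.2 then
      (if xy.2 = x₂ then h ⟨xy, hc⟩ else 0) else 0)
  calc pushforward (fun w : {xy : X₁ × X₂ // p xy.1 = q xy.2} => w.1.2) h x₂
      = ∑ w : {xy : X₁ × X₂ // p xy.1 = q xy.2},
          (if hc : p w.1.1 = q w.1.2 then (if w.1.2 = x₂ then h ⟨w.1, hc⟩ else 0) else 0) := by
        refine Finset.sum_congr rfl fun w _ => ?_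
        rw [dif_pos w.2]
    _ = ∑ x₁, ∑ x₂', if p x₁ = q x₂' then
          (if hc : p x₁ = q x₂' then (if x₂' = x₂ then h ⟨(x₁, x₂'), hc⟩ else 0) else 0)
          else 0 := K
    _ = ∑ x₁, ∑ x₂', if x₂' = x₂ then
          (if hc : p x₁ = q x₂ then h ⟨(x₁, x₂), hc⟩ else 0) else 0 := by
        refine Finset.sum_congr rfl fun x₁ _ => Finset.sum_congr rfl fun x₂' _ => ?_
        by_cases hx : x₂' = x₂
        · subst hx
          by_cases hc : p x₁ = q x₂' <;> simp [hc]
        · by_cases hc : p x₁ = q x₂' <;> simp [hc, hx]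
    _ = ∑ x₁, if hc : p x₁ = q x₂ then h ⟨(x₁, x₂), hc⟩ else 0 := by
        refine Finset.sum_congr rfl fun x₁ _ => ?_
        rw [Finset.sum_ite_eq' Finset.univ x₂
          (fun _ => if hc : p x₁ = q x₂ then h ⟨(x₁, x₂), hc⟩ else 0)]
        simp

lemma marg_eq (m : {xy : X₁ × X₂ // p xy.1 = q xy.2} → ℝ) :
    pushforward p (pushforward (fun w : {xy : X₁ × X₂ // p xy.1 = q xy.2} => w.1.1) m)
      = pushforward q (pushforward (fun w : {xy : X₁ × X₂ // p xy.1 = q xy.2} => w.1.2) m) := by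
  rw [pushforward_comp, pushforward_comp]
  exact congrArg (fun f => pushforward f m) (funext fun w => w.2)



/-- First marginal of a coupling. -/
noncomputable def aMarg (m : {xy : X₁ × X₂ // p xy.1 = q xy.2} → ℝ) : X₁ → ℝ :=
  pushforward (fun v : {xy : X₁ × X₂ // p xy.1 = q xy.2} => v.1.1) m

/-- Second marginal of a coupling. -/
noncomputable def bMarg (m : {xy : X₁ × X₂ // p xy.1 = q xy.2} → ℝ) : X₂ → ℝ :=
  pushforward (fun v : {xy : X₁ × X₂ // p xy.1 = q xy.2} => v.1.2) m

/-- Residual mass at each point of the base. -/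
noncomputable def Rfun (m : {xy : X₁ × X₂ // p xy.1 = q xy.2} → ℝ) (l : ℝ)
    (b' : X₂ → ℝ) : Y → ℝ :=
  pushforward q (fun x₂ => b' x₂ - l * bMarg p q m x₂)

/-- Modified coupling: scale `m` by `l` and fill in with fiberwise product of residuals. -/
noncomputable def adjust (m : {xy : X₁ × X₂ // p xy.1 = q xy.2} → ℝ) (l : ℝ)
    (a' : X₁ → ℝ) (b' : X₂ → ℝ) : {xy : X₁ × X₂ // p xy.1 = q xy.2} → ℝ :=
  fun w =>
    l * m w + (a' w.1.1 - l * aMarg p q m w.1.1) * (b' w.1.2 - l * bMarg p q m w.1.2) /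
        Rfun p q m l b' (p w.1.1)

section AdjustLemmas

variable (m : {xy : X₁ × X₂ // p xy.1 = q xy.2} → ℝ) (l : ℝ) (a' : X₁ → ℝ) (b' : X₂ → ℝ)
  (hm : ∀ w, 0 ≤ m w) (hl : 0 ≤ l)
  (hA : ∀ x, l * aMarg p q m x ≤ a' x)
  (hB : ∀ x, l * bMarg p q m x ≤ b' x)
  (heq : pushforward p a' = pushforward q b')

include heq in
lemma R_eq : pushforward p (fun x₁ => a' x₁ - l * aMarg p q m x₁) = Rfun p q m l b' := by
  unfold Rfun aMarg bMarg
  rw [pushforward_sub_smul, pushforward_sub_smul, heq, marg_eq p q m]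

include hB in
lemma R_nonneg (y : Y) : 0 ≤ Rfun p q m l b' y :=
  pushforward_nonneg q (fun x => sub_nonneg.2 (hB x)) y

include hm hl hA hB in
lemma adjust_nonneg (w : {xy : X₁ × X₂ // p xy.1 = q xy.2}) :
    0 ≤ adjust p q m l a' b' w := by
  have h1 : 0 ≤ l * m w := mul_nonneg hl (hm w)
  have h2 : 0 ≤ a' w.1.1 - l * aMarg p q m w.1.1 := sub_nonneg.2 (hA _)
  have h3 : 0 ≤ b' w.1.2 - l * bMarg p q m w.1.2 := sub_nonneg.2 (hB _)
  exact add_nonneg h1 (div_nonneg (mul_nonneg h2 h3) (R_nonneg p q m l b' hB _))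

include hA hB heq in
lemma adjust_fst :
    pushforward (fun v : {xy : X₁ × X₂ // p xy.1 = q xy.2} => v.1.1)
      (adjust p q m l a' b') = a' := by
  funext x₁
  rw [pushforward_fst_eq]
  have hsplit : ∀ x₂ : X₂,
      (if hc : p x₁ = q x₂ then adjust p q m l a' b' ⟨(x₁, x₂), hc⟩ else 0)
        = l * (if hc : p x₁ = q x₂ then m ⟨(x₁, x₂), hc⟩ else 0)
          + (a' x₁ - l * aMarg p q m x₁) / Rfun p q m l b' (p x₁) *
            (if q x₂ = p x₁ then (b' x₂ - l * bMarg p q m x₂) else 0) := by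
    intro x₂
    by_cases hc : p x₁ = q x₂
    · rw [dif_pos hc, dif_pos hc, if_pos hc.symm]
      show l * m _ + (a' x₁ - l * aMarg p q m x₁) * (b' x₂ - l * bMarg p q m x₂) /
          Rfun p q m l b' (p x₁) = _
      ring
    · rw [dif_neg hc, dif_neg hc, if_neg (fun h => hc h.symm)]
      simp
  rw [Finset.sum_congr rfl (fun x₂ _ => hsplit x₂), Finset.sum_add_distrib,
    ← Finset.mul_sum, ← Finset.mul_sum]
  have hm1 : (∑ x₂, if hc : p x₁ = q x₂ then m ⟨(x₁, x₂), hc⟩ else 0) = aMarg p q m x₁ :=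
    (pushforward_fst_eq p q m x₁).symm
  have hsum : (∑ x₂, if q x₂ = p x₁ then (b' x₂ - l * bMarg p q m x₂) else 0)
      = Rfun p q m l b' (p x₁) := rfl
  rw [hm1, hsum]
  have hRA := congrFun (R_eq p q m l a' b' heq) (p x₁)
  by_cases hR : Rfun p q m l b' (p x₁) = 0
  · have hA1 : a' x₁ - l * aMarg p q m x₁ ≤ 0 := by
      have hle : (fun x => a' x - l * aMarg p q m x) x₁
          ≤ pushforward p (fun x => a' x - l * aMarg p q m x) (p x₁) :=
        single_le_pushforward p (fun x => sub_nonneg.2 (hA x)) x₁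
      rw [hRA, hR] at hle
      exact hle
    have hA0 : a' x₁ - l * aMarg p q m x₁ = 0 := le_antisymm hA1 (sub_nonneg.2 (hA x₁))
    rw [hR, hA0]
    simp only [zero_div, zero_mul, mul_zero, add_zero]
    linarith [hA0]
  · rw [div_mul_cancel₀ _ hR]
    ring

include hA hB heq in
lemma adjust_snd :
    pushforward (fun v : {xy : X₁ × X₂ // p xy.1 = q xy.2} => v.1.2)
      (adjust p q m l a' b') = b' := by
  funext x₂
  rw [pushforward_snd_eq]
  have hsplit : ∀ x₁ : X₁,
      (if hc : p x₁ = q x₂ then adjust p q m l a' b' ⟨(x₁, x₂), hc⟩ else 0)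
        = l * (if hc : p x₁ = q x₂ then m ⟨(x₁, x₂), hc⟩ else 0)
          + (b' x₂ - l * bMarg p q m x₂) / Rfun p q m l b' (q x₂) *
            (if p x₁ = q x₂ then (a' x₁ - l * aMarg p q m x₁) else 0) := by
    intro x₁
    by_cases hc : p x₁ = q x₂
    · rw [dif_pos hc, dif_pos hc, if_pos hc]
      show l * m _ + (a' x₁ - l * aMarg p q m x₁) * (b' x₂ - l * bMarg p q m x₂) /
          Rfun p q m l b' (p x₁) = _
      rw [hc]
      ring
    · rw [dif_neg hc, dif_neg hc, if_neg hc]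
      simp
  rw [Finset.sum_congr rfl (fun x₁ _ => hsplit x₁), Finset.sum_add_distrib,
    ← Finset.mul_sum, ← Finset.mul_sum]
  have hm1 : (∑ x₁, if hc : p x₁ = q x₂ then m ⟨(x₁, x₂), hc⟩ else 0) = bMarg p q m x₂ :=
    (pushforward_snd_eq p q m x₂).symm
  have hRA := congrFun (R_eq p q m l a' b' heq) (q x₂)
  have hsum : (∑ x₁, if p x₁ = q x₂ then (a' x₁ - l * aMarg p q m x₁) else 0)
      = Rfun p q m l b' (q x₂) := by
    rw [← hRA]; rfl
  rw [hm1, hsum]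
  by_cases hR : Rfun p q m l b' (q x₂) = 0
  · have hB1 : b' x₂ - l * bMarg p q m x₂ ≤ 0 := by
      have hle : (fun x => b' x - l * bMarg p q m x) x₂
          ≤ pushforward q (fun x => b' x - l * bMarg p q m x) (q x₂) :=
        single_le_pushforward q (fun x => sub_nonneg.2 (hB x)) x₂
      have hRf : pushforward q (fun x => b' x - l * bMarg p q m x) (q x₂)
          = Rfun p q m l b' (q x₂) := rfl
      rw [hRf, hR] at hle
      exact hle
    have hB0 : b' x₂ - l * bMarg p q m x₂ = 0 := le_antisymm hB1 (sub_nonneg.2 (hB x₂))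
    rw [hR, hB0]
    simp only [zero_div, zero_mul, mul_zero, add_zero]
    linarith [hB0]
  · rw [div_mul_cancel₀ _ hR]
    ring

include hA hB heq in
lemma adjust_sum (ha'1 : ∑ x, a' x = 1) : ∑ w, adjust p q m l a' b' w = 1 := by
  rw [← sum_pushforward (fun v : {xy : X₁ × X₂ // p xy.1 = q xy.2} => v.1.1)
      (adjust p q m l a' b'), adjust_fst p q m l a' b' hA hB heq]
  exact ha'1

end AdjustLemmas

lemma adjust_base (m : {xy : X₁ × X₂ // p xy.1 = q xy.2} → ℝ) :
    adjust p q m 1 (aMarg p q m) (bMarg p q m) = m := by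
  funext w
  simp [adjust]



/-- A (pointed) section of the marginal map. -/
noncomputable def sigmaMap (m : {xy : X₁ × X₂ // p xy.1 = q xy.2} → ℝ)
    (μ : (X₁ → ℝ) × (X₂ → ℝ)) : {xy : X₁ × X₂ // p xy.1 = q xy.2} → ℝ :=
  adjust p q m (lamF (aMarg p q m) μ.1 (bMarg p q m) μ.2) μ.1 μ.2

lemma sigmaMap_mem (m : {xy : X₁ × X₂ // p xy.1 = q xy.2} → ℝ) (hm : ∀ w, 0 ≤ m w)
    (μ : {μ : (X₁ → ℝ) × (X₂ → ℝ) //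
        (μ.1 ∈ stdSimplex ℝ X₁ ∧ μ.2 ∈ stdSimplex ℝ X₂) ∧
          pushforward p μ.1 = pushforward q μ.2}) :
    sigmaMap p q m μ.1 ∈ stdSimplex ℝ {xy : X₁ × X₂ // p xy.1 = q xy.2} := by
  obtain ⟨⟨h1, h2⟩, heq⟩ := μ.2
  have ha : ∀ x, 0 ≤ aMarg p q m x := fun x => pushforward_nonneg _ hm x
  have hb : ∀ x, 0 ≤ bMarg p q m x := fun x => pushforward_nonneg _ hm x
  have hl0 : 0 ≤ lamF (aMarg p q m) μ.1.1 (bMarg p q m) μ.1.2 :=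
    lamF_nonneg ha h1.1 hb h2.1
  have hA : ∀ x, lamF (aMarg p q m) μ.1.1 (bMarg p q m) μ.1.2 * aMarg p q m x ≤ μ.1.1 x :=
    fun x => lamF_mul_le_left ha h1.1 hb h2.1 x
  have hB : ∀ x, lamF (aMarg p q m) μ.1.1 (bMarg p q m) μ.1.2 * bMarg p q m x ≤ μ.1.2 x :=
    fun x => lamF_mul_le_right ha h1.1 hb h2.1 x
  exact ⟨adjust_nonneg p q m _ μ.1.1 μ.1.2 hm hl0 hA hB,
    adjust_sum p q m _ μ.1.1 μ.1.2 hA hB heq h1.2⟩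

lemma chiMap_sigmaMap (m : {xy : X₁ × X₂ // p xy.1 = q xy.2} → ℝ) (hm : ∀ w, 0 ≤ m w)
    (μ : {μ : (X₁ → ℝ) × (X₂ → ℝ) //
        (μ.1 ∈ stdSimplex ℝ X₁ ∧ μ.2 ∈ stdSimplex ℝ X₂) ∧
          pushforward p μ.1 = pushforward q μ.2}) :
    chiMap p q ⟨sigmaMap p q m μ.1, sigmaMap_mem p q m hm μ⟩ = μ := by
  obtain ⟨⟨h1, h2⟩, heq⟩ := μ.2
  have ha : ∀ x, 0 ≤ aMarg p q m x := fun x => pushforward_nonneg _ hm x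
  have hb : ∀ x, 0 ≤ bMarg p q m x := fun x => pushforward_nonneg _ hm x
  have hA : ∀ x, lamF (aMarg p q m) μ.1.1 (bMarg p q m) μ.1.2 * aMarg p q m x ≤ μ.1.1 x :=
    fun x => lamF_mul_le_left ha h1.1 hb h2.1 x
  have hB : ∀ x, lamF (aMarg p q m) μ.1.1 (bMarg p q m) μ.1.2 * bMarg p q m x ≤ μ.1.2 x :=
    fun x => lamF_mul_le_right ha h1.1 hb h2.1 x
  apply Subtype.ext
  apply Prod.ext
  · exact adjust_fst p q m _ μ.1.1 μ.1.2 hA hB heq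
  · exact adjust_snd p q m _ μ.1.1 μ.1.2 hA hB heq

lemma sigmaMap_base (τ : stdSimplex ℝ {xy : X₁ × X₂ // p xy.1 = q xy.2}) :
    sigmaMap p q τ.1 (chiMap p q τ).1 = τ.1 := by
  have h : (chiMap p q τ).1 = (aMarg p q τ.1, bMarg p q τ.1) := rfl
  rw [sigmaMap, h]
  show adjust p q τ.1 (lamF (aMarg p q τ.1) (aMarg p q τ.1) (bMarg p q τ.1) (bMarg p q τ.1))
    (aMarg p q τ.1) (bMarg p q τ.1) = τ.1
  rw [lamF_self, adjust_base]

lemma sigmaMap_contAt (τ : stdSimplex ℝ {xy : X₁ × X₂ // p xy.1 = q xy.2}) :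
    ContinuousAt (fun μ : {μ : (X₁ → ℝ) × (X₂ → ℝ) //
        (μ.1 ∈ stdSimplex ℝ X₁ ∧ μ.2 ∈ stdSimplex ℝ X₂) ∧
          pushforward p μ.1 = pushforward q μ.2} => sigmaMap p q τ.1 μ.1)
      (chiMap p q τ) := by
  set m := τ.1 with hmdef
  have hm : ∀ w, 0 ≤ m w := τ.2.1
  rw [continuousAt_pi]
  intro w
  -- the coordinate function, unfolded
  have hcoord : (fun μ : {μ : (X₁ → ℝ) × (X₂ → ℝ) //
        (μ.1 ∈ stdSimplex ℝ X₁ ∧ μ.2 ∈ stdSimplex ℝ X₂) ∧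
          pushforward p μ.1 = pushforward q μ.2} => sigmaMap p q m μ.1 w)
      = fun μ => lamF (aMarg p q m) μ.1.1 (bMarg p q m) μ.1.2 * m w
          + (μ.1.1 w.1.1 - lamF (aMarg p q m) μ.1.1 (bMarg p q m) μ.1.2 * aMarg p q m w.1.1)
            * (μ.1.2 w.1.2 - lamF (aMarg p q m) μ.1.1 (bMarg p q m) μ.1.2 * bMarg p q m w.1.2)
            / Rfun p q m (lamF (aMarg p q m) μ.1.1 (bMarg p q m) μ.1.2) μ.1.2 (p w.1.1) := rfl
  have hval : sigmaMap p q m (chiMap p q τ).1 w = m w := by rw [sigmaMap_base]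
  have hlcont : Continuous (fun μ : {μ : (X₁ → ℝ) × (X₂ → ℝ) //
        (μ.1 ∈ stdSimplex ℝ X₁ ∧ μ.2 ∈ stdSimplex ℝ X₂) ∧
          pushforward p μ.1 = pushforward q μ.2} =>
      lamF (aMarg p q m) μ.1.1 (bMarg p q m) μ.1.2) :=
    (continuous_lamF (aMarg p q m) (bMarg p q m)).comp continuous_subtype_val
  have hlval : lamF (aMarg p q m) (chiMap p q τ).1.1 (bMarg p q m) (chiMap p q τ).1.2 = 1 := by
    have h : (chiMap p q τ).1 = (aMarg p q m, bMarg p q m) := rfl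
    rw [h]
    exact lamF_self _ _
  have h1 : Filter.Tendsto (fun μ : {μ : (X₁ → ℝ) × (X₂ → ℝ) //
        (μ.1 ∈ stdSimplex ℝ X₁ ∧ μ.2 ∈ stdSimplex ℝ X₂) ∧
          pushforward p μ.1 = pushforward q μ.2} =>
      lamF (aMarg p q m) μ.1.1 (bMarg p q m) μ.1.2 * m w)
      (nhds (chiMap p q τ)) (nhds (m w)) := by
    have := (hlcont.tendsto (chiMap p q τ)).mul_const (m w)
    rwa [hlval, one_mul] at this
  -- the A-bound function
  set g : {μ : (X₁ → ℝ) × (X₂ → ℝ) //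
        (μ.1 ∈ stdSimplex ℝ X₁ ∧ μ.2 ∈ stdSimplex ℝ X₂) ∧
          pushforward p μ.1 = pushforward q μ.2} → ℝ :=
    fun μ => μ.1.1 w.1.1 - lamF (aMarg p q m) μ.1.1 (bMarg p q m) μ.1.2 * aMarg p q m w.1.1
    with hgdef
  have hgcont : Continuous g := by
    apply Continuous.sub
    · exact (continuous_apply w.1.1).comp (continuous_fst.comp continuous_subtype_val)
    · exact hlcont.mul continuous_const
  have hgval : g (chiMap p q τ) = 0 := by
    rw [hgdef]
    simp only
    have h : (chiMap p q τ).1 = (aMarg p q m, bMarg p q m) := rfl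
    rw [h, lamF_self, one_mul]
    simp
  have h2 : Filter.Tendsto (fun μ : {μ : (X₁ → ℝ) × (X₂ → ℝ) //
        (μ.1 ∈ stdSimplex ℝ X₁ ∧ μ.2 ∈ stdSimplex ℝ X₂) ∧
          pushforward p μ.1 = pushforward q μ.2} =>
      (μ.1.1 w.1.1 - lamF (aMarg p q m) μ.1.1 (bMarg p q m) μ.1.2 * aMarg p q m w.1.1)
        * (μ.1.2 w.1.2 - lamF (aMarg p q m) μ.1.1 (bMarg p q m) μ.1.2 * bMarg p q m w.1.2)
        / Rfun p q m (lamF (aMarg p q m) μ.1.1 (bMarg p q m) μ.1.2) μ.1.2 (p w.1.1))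
      (nhds (chiMap p q τ)) (nhds 0) := by
    apply squeeze_zero (g := g)
    · -- nonnegativity
      intro μ
      obtain ⟨⟨h1', h2'⟩, heq'⟩ := μ.2
      have ha : ∀ x, 0 ≤ aMarg p q m x := fun x => pushforward_nonneg _ hm x
      have hb : ∀ x, 0 ≤ bMarg p q m x := fun x => pushforward_nonneg _ hm x
      have hA := fun x => lamF_mul_le_left ha h1'.1 hb h2'.1 (a' := μ.1.1) (b' := μ.1.2) x
      have hB := fun x => lamF_mul_le_right ha h1'.1 hb h2'.1 (a' := μ.1.1) (b' := μ.1.2) x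
      exact div_nonneg (mul_nonneg (sub_nonneg.2 (hA _)) (sub_nonneg.2 (hB _)))
        (R_nonneg p q m _ μ.1.2 hB _)
    · -- bound by g
      intro μ
      obtain ⟨⟨h1', h2'⟩, heq'⟩ := μ.2
      have ha : ∀ x, 0 ≤ aMarg p q m x := fun x => pushforward_nonneg _ hm x
      have hb : ∀ x, 0 ≤ bMarg p q m x := fun x => pushforward_nonneg _ hm x
      have hA := fun x => lamF_mul_le_left ha h1'.1 hb h2'.1 (a' := μ.1.1) (b' := μ.1.2) x
      have hB := fun x => lamF_mul_le_right ha h1'.1 hb h2'.1 (a' := μ.1.1) (b' := μ.1.2) x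
      set l := lamF (aMarg p q m) μ.1.1 (bMarg p q m) μ.1.2
      have hA0 : 0 ≤ μ.1.1 w.1.1 - l * aMarg p q m w.1.1 := sub_nonneg.2 (hA _)
      have hB0 : 0 ≤ μ.1.2 w.1.2 - l * bMarg p q m w.1.2 := sub_nonneg.2 (hB _)
      have hgA : g μ = μ.1.1 w.1.1 - l * aMarg p q m w.1.1 := rfl
      rcases eq_or_lt_of_le (R_nonneg p q m l μ.1.2 hB (p w.1.1)) with hR | hR
      · rw [← hR, div_zero, hgA]
        exact hA0
      · rw [div_le_iff₀ hR, hgA]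
        have hBR : μ.1.2 w.1.2 - l * bMarg p q m w.1.2 ≤ Rfun p q m l μ.1.2 (p w.1.1) := by
          have := single_le_pushforward q
            (u := fun x => μ.1.2 x - l * bMarg p q m x)
            (fun x => sub_nonneg.2 (hB x)) w.1.2
          rw [← w.2] at this
          exact this
        calc (μ.1.1 w.1.1 - l * aMarg p q m w.1.1) * (μ.1.2 w.1.2 - l * bMarg p q m w.1.2)
            ≤ (μ.1.1 w.1.1 - l * aMarg p q m w.1.1) * Rfun p q m l μ.1.2 (p w.1.1) :=
              mul_le_mul_of_nonneg_left hBR hA0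
          _ = _ := rfl
    · -- tendsto of the bound
      have := hgcont.tendsto (chiMap p q τ)
      rwa [hgval] at this
  show Filter.Tendsto (fun μ : {μ : (X₁ → ℝ) × (X₂ → ℝ) //
        (μ.1 ∈ stdSimplex ℝ X₁ ∧ μ.2 ∈ stdSimplex ℝ X₂) ∧
          pushforward p μ.1 = pushforward q μ.2} => sigmaMap p q m μ.1 w)
    (nhds (chiMap p q τ)) (nhds (sigmaMap p q m (chiMap p q τ).1 w))
  rw [hval, hcoord]
  have hfin := h1.add h2
  rwa [add_zero] at hfin


theorem chiMap_open_surjective_affine :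
    Function.Surjective (chiMap p q) ∧ IsOpenMap (chiMap p q) ∧
    (∀ (τ₁ τ₂ : stdSimplex ℝ {xy : X₁ × X₂ // p xy.1 = q xy.2})
        (t : ℝ) (ht0 : 0 ≤ t) (ht1 : t ≤ 1),
      (chiMap p q ⟨t • τ₁.1 + (1 - t) • τ₂.1,
          (convex_stdSimplex ℝ _) τ₁.2 τ₂.2 ht0 (by linarith) (by ring)⟩).1
        = t • (chiMap p q τ₁).1 + (1 - t) • (chiMap p q τ₂).1) := by
  refine ⟨?_, ?_, ?_⟩
  · -- surjectivity
    intro μ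
    exact ⟨⟨sigmaMap p q (fun _ => 0) μ.1, sigmaMap_mem p q _ (fun _ => le_refl 0) μ⟩,
      chiMap_sigmaMap p q _ (fun _ => le_refl 0) μ⟩
  · -- openness
    intro U hU
    rw [isOpen_iff_mem_nhds]
    rintro μ ⟨τ, hτU, rfl⟩
    have hm : ∀ w, 0 ≤ τ.1 w := τ.2.1
    set σ : {μ : (X₁ → ℝ) × (X₂ → ℝ) //
        (μ.1 ∈ stdSimplex ℝ X₁ ∧ μ.2 ∈ stdSimplex ℝ X₂) ∧
          pushforward p μ.1 = pushforward q μ.2} →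
        stdSimplex ℝ {xy : X₁ × X₂ // p xy.1 = q xy.2} :=
      fun μ' => ⟨sigmaMap p q τ.1 μ'.1, sigmaMap_mem p q τ.1 hm μ'⟩ with hσdef
    have hσcont : ContinuousAt σ (chiMap p q τ) :=
      Topology.IsInducing.subtypeVal.continuousAt_iff.2 (sigmaMap_contAt p q τ)
    have hσfix : σ (chiMap p q τ) = τ := Subtype.ext (sigmaMap_base p q τ)
    have hmemU : U ∈ nhds (σ (chiMap p q τ)) := by
      rw [hσfix]
      exact hU.mem_nhds hτU
    refine Filter.mem_of_superset (hσcont.preimage_mem_nhds hmemU) ?_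
    intro μ' hμ'
    exact ⟨σ μ', hμ', chiMap_sigmaMap p q τ.1 hm μ'⟩
  · -- affinity
    intro τ₁ τ₂ t ht0 ht1
    apply Prod.ext
    · show pushforward (fun w : {xy : X₁ × X₂ // p xy.1 = q xy.2} => w.1.1)
        (t • τ₁.1 + (1 - t) • τ₂.1) = _
      rw [pushforward_smul_add]
      rfl
    · show pushforward (fun w : {xy : X₁ × X₂ // p xy.1 = q xy.2} => w.1.2)
        (t • τ₁.1 + (1 - t) • τ₂.1) = _
      rw [pushforward_smul_add]
      rfl

end
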